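/- For every integer m >= 4, sum_{n=1}^infty h_n^(3)/n^m = (1/2)*zeta_H(m-2) + (3/2)*zeta_H(m-1) + zeta_H(m) - (5/4)*zeta(m-1) - (3/4)*zeta(m-2), where zeta_H(s) = sum_{n=1}^infty H_n/n^s. -/

import Mathlib

open scoped BigOperators

noncomputable def H (n : ℕ) : ℝ := ∑ k ∈ Finset.range n, (1 : ℝ) / (k + 1)

noncomputable def h : ℕ → ℕ → ℝ
  | 0, n => 1 / n
  | r + 1, n => ∑ k ∈ Finset.range n, h r (k + 1)

noncomputable def zeta (m : ℕ) : ℝ := ∑' n : ℕ, (1 : ℝ) / ((n : ℝ) + 1) ^ m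

noncomputable def hzeta (m k : ℕ) : ℝ := ∑' j : ℕ, (1 : ℝ) / ((j : ℝ) + k) ^ m

noncomputable def zetaH (m : ℕ) : ℝ := ∑' n : ℕ, H (n + 1) / ((n : ℝ) + 1) ^ m

def stirling1 : ℕ → ℕ → ℕ
  | 0, 0 => 1
  | 0, _ + 1 => 0
  | _ + 1, 0 => 0
  | n + 1, k + 1 => stirling1 n k + n * stirling1 n (k + 1)

/-! The closed form `h_n^(3) = C(n+2, 2) (H_{n+2} - 3/2)` makes `h_n^(3)` equal to
`(n²/2 + 3n/2 + 1) H_n - 3n²/4 - 5n/4`, so dividing by `n^m` splits the series termwise into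
`zeta_H` and `zeta` values. Every piece converges for `m ≥ 4` because `H_n ≤ 2√n`. -/

lemma H_succ (n : ℕ) : H (n + 1) = H n + 1 / ((n : ℝ) + 1) := by
  simp [H, Finset.sum_range_succ]

lemma H_nonneg (n : ℕ) : 0 ≤ H n :=
  Finset.sum_nonneg fun _ _ => by positivity

lemma h_succ_succ (r n : ℕ) : h (r + 1) (n + 1) = h (r + 1) n + h r (n + 1) :=
  Finset.sum_range_succ _ _

theorem h_succ_eq_choose_mul (r n : ℕ) :
    h (r + 1) n = (n + r).choose r * (H (n + r) - H r) := by
  induction r generalizing n with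
  | zero => simp [h, H]
  | succ r ihr =>
    induction n with
    | zero => simp [h]
    | succ n ihn =>
      have hpascal : ((n + r + 1 + 1).choose (r + 1) : ℝ) =
          (n + r + 1).choose r + (n + r + 1).choose (r + 1) := by
        exact_mod_cast Nat.choose_succ_succ' (n + r + 1) r
      have habsorb : ((n + r + 1 + 1).choose (r + 1) : ℝ) / (n + r + 1 + 1) =
          (n + r + 1).choose r / (r + 1) := by
        rw [div_eq_div_iff (by positivity) (by positivity)]
        exact_mod_cast (Nat.add_one_mul_choose_eq (n + r + 1) r).symm.trans (Nat.mul_comm _ _)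
      rw [h_succ_succ, ihn, ihr, show n + 1 + (r + 1) = n + r + 1 + 1 by ring,
        show n + (r + 1) = n + r + 1 by ring, show n + 1 + r = n + r + 1 by ring,
        H_succ (n + r + 1), H_succ r]
      push_cast at hpascal habsorb ⊢
      linear_combination (H r - H (n + r + 1) + 1 / (r + 1)) * hpascal - habsorb

lemma h_three_succ (n : ℕ) :
    h 3 (n + 1) = (((n : ℝ) + 1) ^ 2 / 2 + 3 * ((n : ℝ) + 1) / 2 + 1) * H (n + 1)
      - 3 / 4 * ((n : ℝ) + 1) ^ 2 - 5 / 4 * ((n : ℝ) + 1) := by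
  have hH2 : H 2 = 3 / 2 := by norm_num [H, Finset.sum_range_succ]
  rw [h_succ_eq_choose_mul 2, Nat.cast_choose_two, hH2, H_succ (n + 1 + 1), H_succ (n + 1)]
  push_cast
  field_simp
  ring

lemma H_le_two_mul_sqrt (n : ℕ) : H n ≤ 2 * √n := by
  induction n with
  | zero => simp [H]
  | succ n ih =>
    have hstep : 1 / ((n : ℝ) + 1) ≤ 2 * √((n : ℝ) + 1) - 2 * √n := by
      have hsq : √((n : ℝ) + 1) ^ 2 = n + 1 := Real.sq_sqrt (by positivity)
      have hsq' : √(n : ℝ) ^ 2 = n := Real.sq_sqrt (by positivity)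
      have hmono : √(n : ℝ) ≤ √((n : ℝ) + 1) := Real.sqrt_le_sqrt (by linarith)
      rw [div_le_iff₀ (by positivity)]
      nlinarith [sq_nonneg (√((n : ℝ) + 1) - √n), Real.sqrt_nonneg (n : ℝ)]
    rw [H_succ]
    push_cast
    linarith

lemma summable_one_div_add_one_pow {k : ℕ} (hk : 2 ≤ k) :
    Summable (fun n : ℕ => 1 / ((n : ℝ) + 1) ^ k) := by
  exact_mod_cast (summable_nat_add_iff 1).2 (Real.summable_one_div_nat_pow.2 hk)

lemma summable_H_div_pow {k : ℕ} (hk : 2 ≤ k) :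
    Summable (fun n : ℕ => H (n + 1) / ((n : ℝ) + 1) ^ k) := by
  have hdom : Summable (fun n : ℕ => 2 / ((n : ℝ) + 1) ^ (3 / 2 : ℝ)) := by
    have hp : Summable (fun n : ℕ => 1 / (n : ℝ) ^ (3 / 2 : ℝ)) :=
      Real.summable_one_div_nat_rpow.2 (by norm_num)
    simpa [div_eq_mul_inv] using ((summable_nat_add_iff 1).2 hp).mul_left 2
  refine hdom.of_nonneg_of_le (fun n => div_nonneg (H_nonneg _) (by positivity)) fun n => ?_
  have hH : H (n + 1) ≤ 2 * √((n : ℝ) + 1) := by exact_mod_cast H_le_two_mul_sqrt (n + 1)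
  calc H (n + 1) / ((n : ℝ) + 1) ^ k ≤ 2 * √((n : ℝ) + 1) / ((n : ℝ) + 1) ^ 2 := by
        gcongr
        simp
    _ = 2 / ((n : ℝ) + 1) ^ (3 / 2 : ℝ) := by
        rw [Real.sqrt_eq_rpow, div_eq_div_iff (by positivity) (by positivity), mul_assoc,
          ← Real.rpow_add (by positivity), ← Real.rpow_natCast]
        norm_num

theorem stmt14 (m : ℕ) (hm : 4 ≤ m) :
    ∑' n : ℕ, h 3 (n + 1) / ((n : ℝ) + 1) ^ m =
      (1 / 2) * zetaH (m - 2) + (3 / 2) * zetaH (m - 1) + zetaH m -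
        (5 / 4) * zeta (m - 1) - (3 / 4) * zeta (m - 2) := by
  obtain ⟨k, hk, rfl⟩ : ∃ k, 2 ≤ k ∧ m = k + 2 := ⟨m - 2, by omega, by omega⟩
  rw [Nat.add_sub_cancel, show k + 2 - 1 = k + 1 by omega]
  have hsum := ((((summable_H_div_pow hk).hasSum.mul_left (1 / 2)).add
    ((summable_H_div_pow (k := k + 1) (by omega)).hasSum.mul_left (3 / 2))).add
    (summable_H_div_pow (k := k + 2) (by omega)).hasSum).sub
    ((summable_one_div_add_one_pow (k := k + 1) (by omega)).hasSum.mul_left (5 / 4)) |>.sub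
    ((summable_one_div_add_one_pow hk).hasSum.mul_left (3 / 4))
  refine (tsum_congr fun n => ?_).trans hsum.tsum_eq
  rw [h_three_succ]
  field_simp
  ring
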